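/- arXiv:1612.05508 — 6 statements merged into one kernel-verified Lean document; each statement's English description precedes it below -/
import Mathlib

section
/- Let u be a good representative of a BV function on (a,b), let (c,d) ⊂ (a,b), set t = (1/(d-c))∫_c^d u, and suppose u(c) ≤ u(d) and t ≤ u(c). Then the total variation of u on [c,d] satisfies |Du|([c,d]) ≥ (u(c) - t) + (u(d) - t). -/
open MeasureTheory Set

/-!
Since `t` is the average of `u` over `(c, d)`, some `x ∈ (c, d)` has `u x ≤ t`. The variation of
`u` on `[c, d]` is at least the variation along the path `c → x → d`, that is
`|u c - u x| + |u x - u d| ≥ (u c - t) + (u d - t)`.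
-/

theorem eVariationOn.edist_add_edist_le {α E : Type*} [LinearOrder α] [PseudoEMetricSpace E]
    (f : α → E) {s : Set α} {x y z : α} (hx : x ∈ s) (hy : y ∈ s) (hz : z ∈ s)
    (hxy : x ≤ y) (hyz : y ≤ z) :
    edist (f x) (f y) + edist (f y) (f z) ≤ eVariationOn f s :=
  calc edist (f x) (f y) + edist (f y) (f z)
      ≤ eVariationOn f (s ∩ Icc x y) + eVariationOn f (s ∩ Icc y z) :=
        add_le_add (eVariationOn.edist_le f ⟨hx, le_rfl, hxy⟩ ⟨hy, hxy, le_rfl⟩)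
          (eVariationOn.edist_le f ⟨hy, le_rfl, hyz⟩ ⟨hz, hyz, le_rfl⟩)
    _ = eVariationOn f (s ∩ Icc x z) := eVariationOn.Icc_add_Icc f hxy hyz hy
    _ ≤ eVariationOn f s := eVariationOn.mono f inter_subset_left

theorem setAverage_Ioo_eq {c d : ℝ} (hcd : c ≤ d) (u : ℝ → ℝ) :
    ⨍ y in Ioo c d, u y = (d - c)⁻¹ * ∫ y in Ioo c d, u y := by
  rw [setAverage_eq, Real.volume_real_Ioo_of_le hcd, smul_eq_mul]

theorem ofReal_sub_add_sub_le_edist_add_edist {p q t w : ℝ} (hw : w ≤ t) :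
    ENNReal.ofReal ((p - t) + (q - t)) ≤ edist p w + edist w q := by
  rw [edist_dist, edist_dist, ← ENNReal.ofReal_add dist_nonneg dist_nonneg]
  refine ENNReal.ofReal_le_ofReal ?_
  have hp : p - w ≤ dist p w := le_abs_self _
  have hq : q - w ≤ dist w q := by rw [dist_comm]; exact le_abs_self _
  linarith

theorem stmt1_general (c d : ℝ) (hcd : c < d)
    (u : ℝ → ℝ)
    (hu : IntegrableOn u (Set.Ioo c d)) :
    ENNReal.ofReal ((u c - (d - c)⁻¹ * (∫ y in Set.Ioo c d, u y)) +
        (u d - (d - c)⁻¹ * (∫ y in Set.Ioo c d, u y))) ≤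
      eVariationOn u (Set.Icc c d) := by
  obtain ⟨x, ⟨hcx, hxd⟩, hx⟩ := exists_le_setAverage
    (by simp [Real.volume_Ioo, hcd]) (by simp [Real.volume_Ioo]) hu
  rw [setAverage_Ioo_eq hcd.le] at hx
  calc _ ≤ edist (u c) (u x) + edist (u x) (u d) := ofReal_sub_add_sub_le_edist_add_edist hx
    _ ≤ eVariationOn u (Icc c d) :=
      eVariationOn.edist_add_edist_le u (left_mem_Icc.2 hcd.le) ⟨hcx.le, hxd.le⟩
        (right_mem_Icc.2 hcd.le) hcx.le hxd.le

/-- for a good representative `u` of a BV function on `(a,b)`,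
if `t` is the average of `u` on `(c,d) ⊂ (a,b)`, `u c ≤ u d` and `t ≤ u c`,
then the variation of `u` on `[c,d]` is at least `(u c - t) + (u d - t)`. -/
theorem stmt1 (a b c d : ℝ) (hac : a < c) (hcd : c < d) (hdb : d < b)
    (u : ℝ → ℝ) (hbv : BoundedVariationOn u (Set.Ioo a b))
    (hu : IntegrableOn u (Set.Ioo c d))
    (hud : u c ≤ u d)
    (ht : (d - c)⁻¹ * (∫ y in Set.Ioo c d, u y) ≤ u c) :
    ENNReal.ofReal ((u c - (d - c)⁻¹ * (∫ y in Set.Ioo c d, u y)) +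
        (u d - (d - c)⁻¹ * (∫ y in Set.Ioo c d, u y))) ≤
      eVariationOn u (Set.Icc c d) :=
  stmt1_general c d hcd u hu
end

section
/- For p > 1, every minimizer u = (u_1,…,u_k) of G(v) = Σ_{i=2}^k |v_i - v_{i-1}| + λ Σ_{i=1}^k L_i |f_i - v_i|^p satisfies min_i f_i ≤ u_j ≤ max_i f_i for all j. -/
/-!
Clamping a competitor to `[min f, max f]` is 1-Lipschitz, so it does not increase the total
variation term, and it moves every value towards every data point `f i`, so it does not increase
the fidelity term either. If some `u j` lay outside the interval, the fidelity term at `j` would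
strictly decrease (as `L j > 0` and `t ↦ t ^ p` is strictly increasing on `[0, ∞)`), contradicting
minimality.
-/

/-- Predecessor index: `i - 1` (and `0` maps to `0`). -/
def pred {k : ℕ} (i : Fin k) : Fin k :=
  ⟨i.val - 1, Nat.lt_of_le_of_lt (Nat.sub_le _ _) i.isLt⟩

/-- The discrete energy `G(v) = ∑_{i≥2} |v_i - v_{i-1}| + λ ∑_i L_i |f_i - v_i|^p`
(indices written with `Fin k`, i.e. `0,…,k-1`). -/
noncomputable def G (k : ℕ) (lam p : ℝ) (L f : Fin k → ℝ) (v : Fin k → ℝ) : ℝ :=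
  (∑ i : Fin k, if i.val = 0 then 0 else |v i - v (pred i)|) +
    lam * ∑ i : Fin k, L i * |f i - v i| ^ p

open Set

lemma abs_sub_projIcc_lt {a b y x : ℝ} (h : a ≤ b) (hy : y ∈ Icc a b) (hx : x ∉ Icc a b) :
    |y - projIcc a b h x| < |y - x| := by
  rcases not_and_or.mp hx with hxa | hxb
  · rw [projIcc_of_le_left h (not_le.mp hxa).le, abs_of_nonneg (sub_nonneg.mpr hy.1),
      abs_of_pos (by linarith [hy.1, not_le.mp hxa])]
    linarith [not_le.mp hxa]
  · rw [projIcc_of_right_le h (not_le.mp hxb).le, abs_of_nonpos (sub_nonpos.mpr hy.2),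
      abs_of_neg (by linarith [hy.2, not_le.mp hxb])]
    linarith [not_le.mp hxb]

lemma abs_sub_projIcc_le {a b y : ℝ} (h : a ≤ b) (hy : y ∈ Icc a b) (x : ℝ) :
    |y - projIcc a b h x| ≤ |y - x| := by
  by_cases hx : x ∈ Icc a b
  · rw [projIcc_of_mem h hx]
  · exact (abs_sub_projIcc_lt h hy hx).le

section Energy

variable {k : ℕ} {lam p : ℝ} {L f : Fin k → ℝ}

lemma G_comp_lt_of_contraction (hlam : 0 < lam) (hp : 0 < p) (hL : ∀ i, 0 < L i)
    (φ : ℝ → ℝ) (hφ : ∀ x y, |φ x - φ y| ≤ |x - y|) (u : Fin k → ℝ)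
    (hfid : ∀ i, |f i - φ (u i)| ≤ |f i - u i|) (j : Fin k) (hj : |f j - φ (u j)| < |f j - u j|) :
    G k lam p L f (φ ∘ u) < G k lam p L f u := by
  have hTV : (∑ i : Fin k, if i.val = 0 then 0 else |φ (u i) - φ (u (pred i))|) ≤
      ∑ i : Fin k, if i.val = 0 then 0 else |u i - u (pred i)| :=
    Finset.sum_le_sum fun i _ => by split_ifs; exacts [le_rfl, hφ _ _]
  have hFid : ∑ i : Fin k, L i * |f i - φ (u i)| ^ p < ∑ i : Fin k, L i * |f i - u i| ^ p :=
    Finset.sum_lt_sum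
      (fun i _ => mul_le_mul_of_nonneg_left
        (Real.rpow_le_rpow (abs_nonneg _) (hfid i) hp.le) (hL i).le)
      ⟨j, Finset.mem_univ j, mul_lt_mul_of_pos_left
        (Real.rpow_lt_rpow (abs_nonneg _) hj hp) (hL j)⟩
  exact add_lt_add_of_le_of_lt hTV (mul_lt_mul_of_pos_left hFid hlam)

lemma minimizer_mem_Icc (hlam : 0 < lam) (hp : 0 < p) (hL : ∀ i, 0 < L i) {a b : ℝ}
    (hab : a ≤ b) (hf : ∀ i, f i ∈ Icc a b) (u : Fin k → ℝ)
    (hu : ∀ v : Fin k → ℝ, G k lam p L f u ≤ G k lam p L f v) (j : Fin k) :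
    u j ∈ Icc a b := by
  by_contra hj
  exact (hu _).not_gt (G_comp_lt_of_contraction hlam hp hL (fun x => projIcc a b hab x)
    (fun x y => abs_projIcc_sub_projIcc hab) u
    (fun i => abs_sub_projIcc_le hab (hf i) (u i)) j (abs_sub_projIcc_lt hab (hf j) hj))

end Energy

theorem stmt5_general (k : ℕ) (lam p : ℝ) (hlam : 0 < lam) (hp : 1 < p)
    (L f : Fin k → ℝ) (hL : ∀ i, 0 < L i)
    (u : Fin k → ℝ) (hu : ∀ v : Fin k → ℝ, G k lam p L f u ≤ G k lam p L f v) :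
    ∀ j : Fin k, sInf (Set.range f) ≤ u j ∧ u j ≤ sSup (Set.range f) := by
  have hf : ∀ i, f i ∈ Icc (sInf (range f)) (sSup (range f)) := fun i =>
    ⟨csInf_le (finite_range f).bddBelow ⟨i, rfl⟩, le_csSup (finite_range f).bddAbove ⟨i, rfl⟩⟩
  intro j
  exact minimizer_mem_Icc hlam (zero_lt_one.trans hp) hL ((hf j).1.trans (hf j).2) hf u hu j

/-- for `p > 1`, every minimizer of `G` takes values between the
minimum and the maximum of `f`. -/
theorem stmt5 (k : ℕ) (hk : 1 ≤ k) (lam p : ℝ) (hlam : 0 < lam) (hp : 1 < p)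
    (L f : Fin k → ℝ) (hL : ∀ i, 0 < L i)
    (u : Fin k → ℝ) (hu : ∀ v : Fin k → ℝ, G k lam p L f u ≤ G k lam p L f v) :
    ∀ j : Fin k, sInf (Set.range f) ≤ u j ∧ u j ≤ sSup (Set.range f) :=
  stmt5_general k lam p hlam hp L f hL u hu
end

section
/- For p = 1, there exists a minimizer u = (u_1,…,u_k) of G(v) = Σ_{i=2}^k |v_i - v_{i-1}| + λ Σ_{i=1}^k L_i |f_i - v_i| over ℝ^k such that each u_i ∈ {f_1,…,f_k}. -/
/-- The discrete energy with `L^1` fidelity term (`p = 1`). -/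
noncomputable def G1 (k : ℕ) (lam : ℝ) (L f : Fin k → ℝ) (v : Fin k → ℝ) : ℝ :=
  (∑ i : Fin k, if i.val = 0 then 0 else |v i - v (pred i)|) +
    lam * ∑ i : Fin k, L i * |f i - v i|

/-!
A minimizer exists: clamping every entry to an interval containing all `f i` does not
increase `G1`, so it suffices to minimize over a compact box. Among minimizers, take `u`
for which `u` and `f` take the fewest distinct values together, and suppose `u` takes a
value `c` outside `range f`. Let `d` be the distance from `c` to the nearest other value
of `u` or `f`. Moving the level set `{u = c}` to `c + d` or to `c - d` crosses no
breakpoint of `G1`, so the two energies average to `G1 u`; by minimality both are minimal.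
One of the two moves puts the level `c` onto an existing value, which removes `c` and
creates no new value.
-/

open Finset

theorem abs_sub_add_abs_add_of_abs_le {a d : ℝ} (h : |d| ≤ |a|) :
    |a - d| + |a + d| = 2 * |a| := by
  rcases abs_le.mp h with ⟨h₁, h₂⟩
  rcases le_total 0 a with ha | ha
  · rw [abs_of_nonneg ha] at h₁ h₂ ⊢
    rw [abs_of_nonneg (by linarith), abs_of_nonneg (by linarith)]
    ring
  · rw [abs_of_nonpos ha] at h₁ h₂ ⊢
    rw [abs_of_nonpos (by linarith), abs_of_nonpos (by linarith)]
    ring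

noncomputable def shiftValue (c t x : ℝ) : ℝ :=
  if x = c then c + t else x

theorem abs_shiftValue_sub_add_abs_shiftValue_sub {c t x y : ℝ}
    (hx : x ≠ c → |t| ≤ |x - c|) (hy : y ≠ c → |t| ≤ |y - c|) :
    |shiftValue c t x - shiftValue c t y| + |shiftValue c (-t) x - shiftValue c (-t) y|
      = 2 * |x - y| := by
  unfold shiftValue
  by_cases hxc : x = c <;> by_cases hyc : y = c <;> simp only [hxc, hyc, if_true, if_false]
  · simp
  · have := abs_sub_add_abs_add_of_abs_le (a := c - y) (d := -t)
      (by rw [abs_neg, abs_sub_comm]; exact hy hyc)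
    rw [← this]
    ring_nf
  · have := abs_sub_add_abs_add_of_abs_le (a := x - c) (d := t) (hx hxc)
    rw [← this]
    ring_nf
  · ring

section

variable {k : ℕ} {lam : ℝ} {L f : Fin k → ℝ}

theorem continuous_G1 : Continuous (G1 k lam L f) := by
  unfold G1
  refine (continuous_finsetSum _ fun i _ => ?_).add (by fun_prop)
  split_ifs <;> fun_prop

theorem G1_comp_le {φ : ℝ → ℝ} (hφ : LipschitzWith 1 φ) (hfix : ∀ i, φ (f i) = f i)
    (hlam : 0 ≤ lam) (hL : ∀ i, 0 ≤ L i) (v : Fin k → ℝ) :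
    G1 k lam L f (φ ∘ v) ≤ G1 k lam L f v := by
  have hφ' : ∀ x y, |φ x - φ y| ≤ |x - y| := fun x y => by
    simpa [Real.dist_eq] using hφ.dist_le_mul x y
  unfold G1
  refine add_le_add (sum_le_sum fun i _ => ?_) (mul_le_mul_of_nonneg_left
    (sum_le_sum fun i _ => mul_le_mul_of_nonneg_left ?_ (hL i)) hlam)
  · split_ifs
    · rfl
    · exact hφ' _ _
  · simpa only [Function.comp_apply, hfix] using hφ' (f i) (v i)

theorem exists_forall_G1_le (hlam : 0 ≤ lam) (hL : ∀ i, 0 ≤ L i) :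
    ∃ u : Fin k → ℝ, ∀ v, G1 k lam L f u ≤ G1 k lam L f v := by
  set M := ∑ i, |f i|
  have hf : ∀ i, f i ∈ Set.Icc (-M) M := fun i =>
    abs_le.mp (single_le_sum (fun j _ => abs_nonneg (f j)) (mem_univ i))
  have hM : -M ≤ M := by
    linarith [sum_nonneg fun j (_ : j ∈ univ) => abs_nonneg (f j)]
  set φ : ℝ → ℝ := Subtype.val ∘ Set.projIcc (-M) M hM
  have hφ : LipschitzWith 1 φ := by
    simpa using (LipschitzWith.subtype_val _).comp (LipschitzWith.projIcc hM)
  have hfix : ∀ i, φ (f i) = f i := fun i => by simp [φ, Set.projIcc_of_mem hM (hf i)]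
  obtain ⟨u, -, hu⟩ := (isCompact_Icc (a := fun _ : Fin k => -M) (b := fun _ => M)).exists_isMinOn
    ⟨fun _ => -M, le_rfl, fun _ => hM⟩ continuous_G1.continuousOn
  refine ⟨u, fun v => le_trans (hu ?_) (G1_comp_le hφ hfix hlam hL v)⟩
  exact ⟨fun i => (Set.projIcc (-M) M hM (v i)).2.1, fun i => (Set.projIcc (-M) M hM (v i)).2.2⟩

theorem G1_comp_add_G1_comp {g₁ g₂ : ℝ → ℝ} {u : Fin k → ℝ}
    (hfix₁ : ∀ i, g₁ (f i) = f i) (hfix₂ : ∀ i, g₂ (f i) = f i)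
    (h : ∀ x ∈ Set.range u ∪ Set.range f, ∀ y ∈ Set.range u,
      |g₁ x - g₁ y| + |g₂ x - g₂ y| = 2 * |x - y|) :
    G1 k lam L f (g₁ ∘ u) + G1 k lam L f (g₂ ∘ u) = 2 * G1 k lam L f u := by
  have hTV : (∑ i : Fin k, if i.val = 0 then 0 else |(g₁ ∘ u) i - (g₁ ∘ u) (pred i)|) +
      (∑ i : Fin k, if i.val = 0 then 0 else |(g₂ ∘ u) i - (g₂ ∘ u) (pred i)|) =
      2 * ∑ i : Fin k, if i.val = 0 then 0 else |u i - u (pred i)| := by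
    rw [← sum_add_distrib, mul_sum]
    refine sum_congr rfl fun i _ => ?_
    split_ifs
    · simp
    · exact h _ (Or.inl ⟨i, rfl⟩) _ ⟨pred i, rfl⟩
  have hfid : (∑ i, L i * |f i - (g₁ ∘ u) i|) + (∑ i, L i * |f i - (g₂ ∘ u) i|) =
      2 * ∑ i, L i * |f i - u i| := by
    rw [← sum_add_distrib, mul_sum]
    refine sum_congr rfl fun i _ => ?_
    have := h _ (Or.inr ⟨i, rfl⟩) _ ⟨i, rfl⟩
    rw [hfix₁, hfix₂] at this
    simp only [Function.comp_apply]
    linear_combination L i * this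
  unfold G1
  linear_combination hTV + lam * hfid

theorem exists_minimizer_image_union_subset_erase {u : Fin k → ℝ}
    (hu : ∀ v, G1 k lam L f u ≤ G1 k lam L f v) {c : ℝ} (hcu : c ∈ Set.range u)
    (hcf : c ∉ Set.range f) :
    ∃ u' : Fin k → ℝ, (∀ v, G1 k lam L f u' ≤ G1 k lam L f v) ∧
      univ.image u' ∪ univ.image f ⊆ (univ.image u ∪ univ.image f).erase c := by
  set T := (univ.image u ∪ univ.image f).erase c
  have hfT : ∀ i, f i ∈ T := fun i =>
    mem_erase.mpr ⟨fun h => hcf ⟨i, h⟩, mem_union_right _ (mem_image_of_mem f (mem_univ i))⟩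
  have huT : ∀ i, u i ≠ c → u i ∈ T := fun i h =>
    mem_erase.mpr ⟨h, mem_union_left _ (mem_image_of_mem u (mem_univ i))⟩
  obtain ⟨j, -⟩ := hcu
  obtain ⟨x₀, hx₀T, hx₀⟩ := T.exists_min_image (fun x => |x - c|) ⟨f j, hfT j⟩
  have hnear : ∀ x ∈ Set.range u ∪ Set.range f, x ≠ c → |x₀ - c| ≤ |x - c| := by
    rintro x (⟨i, rfl⟩ | ⟨i, rfl⟩) hxc
    · exact hx₀ _ (huT i hxc)
    · exact hx₀ _ (hfT i)
  have hfix : ∀ t i, shiftValue c t (f i) = f i := fun t i =>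
    if_neg fun h => hcf ⟨i, h⟩
  have hsum : G1 k lam L f (shiftValue c (x₀ - c) ∘ u) +
      G1 k lam L f (shiftValue c (-(x₀ - c)) ∘ u) = 2 * G1 k lam L f u :=
    G1_comp_add_G1_comp (hfix _) (hfix _) fun x hx y hy =>
      abs_shiftValue_sub_add_abs_shiftValue_sub (hnear x hx) (hnear y (Or.inl hy))
  refine ⟨shiftValue c (x₀ - c) ∘ u, fun v => ?_, union_subset ?_ (fun x hx => ?_)⟩
  · linarith [hu v, hu (shiftValue c (x₀ - c) ∘ u), hu (shiftValue c (-(x₀ - c)) ∘ u)]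
  · refine image_subset_iff.mpr fun i _ => ?_
    by_cases h : u i = c
    · simpa [shiftValue, h] using hx₀T
    · simpa [shiftValue, h] using huT i h
  · obtain ⟨i, -, rfl⟩ := mem_image.mp hx
    exact hfT i

theorem exists_minimizer_forall_mem_range {u : Fin k → ℝ}
    (hu : ∀ v, G1 k lam L f u ≤ G1 k lam L f v) :
    ∃ u' : Fin k → ℝ, (∀ v, G1 k lam L f u' ≤ G1 k lam L f v) ∧ ∀ i, u' i ∈ Set.range f := by
  induction hn : (univ.image u ∪ univ.image f).card using Nat.strong_induction_on
    generalizing u with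
  | _ n ih =>
    by_cases h : ∀ i, u i ∈ Set.range f
    · exact ⟨u, hu, h⟩
    obtain ⟨i, hi⟩ := not_forall.mp h
    obtain ⟨u', hu', hsub⟩ := exists_minimizer_image_union_subset_erase hu ⟨i, rfl⟩ hi
    refine ih _ ?_ hu' rfl
    rw [← hn]
    exact (card_le_card hsub).trans_lt
      (card_erase_lt_of_mem (mem_union_left _ (mem_image_of_mem u (mem_univ i))))

end

theorem stmt6_general (k : ℕ) (lam : ℝ) (hlam : 0 < lam)
    (L f : Fin k → ℝ) (hL : ∀ i, 0 < L i) :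
    ∃ u : Fin k → ℝ, (∀ v : Fin k → ℝ, G1 k lam L f u ≤ G1 k lam L f v) ∧
      ∀ i : Fin k, u i ∈ Set.range f := by
  obtain ⟨u, hu⟩ := exists_forall_G1_le hlam.le fun i => (hL i).le
  exact exists_minimizer_forall_mem_range hu

/-- for `p = 1` there is a minimizer of `G` all of whose entries are
values of `f`. -/
theorem stmt6 (k : ℕ) (hk : 1 ≤ k) (lam : ℝ) (hlam : 0 < lam)
    (L f : Fin k → ℝ) (hL : ∀ i, 0 < L i) :
    ∃ u : Fin k → ℝ, (∀ v : Fin k → ℝ, G1 k lam L f u ≤ G1 k lam L f v) ∧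
      ∀ i : Fin k, u i ∈ Set.range f :=
  stmt6_general k lam hlam L f hL
end

section
/- For p = 1, set λ̄ = (min_{i} |f_i - f_{i-1}|) / (k (max_i L_i)(max f - min f)), assuming f is not constant. Then for every λ < λ̄, every minimizer of G(v) = Σ_{i=2}^k |v_i - v_{i-1}| + λ Σ_{i=1}^k L_i |f_i - v_i| taking values in {f_1,…,f_k} is a constant vector. -/
/-!
Compare a minimizer `u` with the constant vector `u j`. Every `|u i - u j|` is at most the total
variation `TV(u)`, so `|f i - u j| ≤ |f i - u i| + TV(u)` and the fidelity term of the constant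
vector exceeds that of `u` by at most `k (max L) TV(u)`. Minimality then gives
`TV(u) ≤ λ k (max L) TV(u)`. Since the smallest jump of `f` is at most `max f - min f`, the
threshold `λ̄` is at most `1 / (k max L)`, so `TV(u) = 0` and `u` is constant.
-/

open Finset

theorem abs_sub_le_sSup_sub_sInf {ι : Type*} [Finite ι] (f : ι → ℝ) (i j : ι) :
    |f i - f j| ≤ sSup (Set.range f) - sInf (Set.range f) := by
  have hA := (Set.finite_range f).bddAbove
  have hB := (Set.finite_range f).bddBelow
  exact abs_sub_le_of_le_of_le (csInf_le hB ⟨i, rfl⟩) (le_csSup hA ⟨i, rfl⟩)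
    (csInf_le hB ⟨j, rfl⟩) (le_csSup hA ⟨j, rfl⟩)

section Energy

variable {k : ℕ}

theorem val_pred (i : Fin k) : (pred i).val = i.val - 1 :=
  rfl

theorem pred_lt {i : Fin k} (hi : i.val ≠ 0) : pred i < i := by
  rw [Fin.lt_def, val_pred]
  omega

noncomputable def totalVariation (v : Fin k → ℝ) : ℝ :=
  ∑ i : Fin k, if i.val = 0 then 0 else |v i - v (pred i)|

noncomputable def fidelity (L f v : Fin k → ℝ) : ℝ :=
  ∑ i : Fin k, L i * |f i - v i|

theorem G1_eq (lam : ℝ) (L f v : Fin k → ℝ) :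
    G1 k lam L f v = totalVariation v + lam * fidelity L f v :=
  rfl

theorem totalVariation_eq_sum_abs (v : Fin k → ℝ) :
    totalVariation v = ∑ i : Fin k, |v i - v (pred i)| := by
  refine Finset.sum_congr rfl fun i _ => ?_
  split_ifs with hi
  · have : pred i = i := Fin.ext (by rw [val_pred, hi])
    simp [this]
  · rfl

theorem abs_sub_le_sum_Ioc (v : Fin k → ℝ) {i j : Fin k} (hij : i ≤ j) :
    |v j - v i| ≤ ∑ m ∈ Ioc i j, |v m - v (pred m)| := by
  induction j using WellFoundedLT.induction with
  | _ j ih =>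
    rcases hij.eq_or_lt with rfl | hij
    · simp
    rw [Fin.lt_def] at hij
    have hj : j.val ≠ 0 := by omega
    have hi : i ≤ pred j := by
      rw [Fin.le_def, val_pred]
      omega
    have hIoc : Ioc i j = insert j (Ioc i (pred j)) := by
      ext m
      simp only [mem_Ioc, mem_insert, Fin.lt_def, Fin.le_def, Fin.ext_iff, val_pred]
      omega
    have hnotMem : j ∉ Ioc i (pred j) := fun hm => (pred_lt hj).not_ge (mem_Ioc.mp hm).2
    rw [hIoc, sum_insert hnotMem]
    calc |v j - v i| ≤ |v j - v (pred j)| + |v (pred j) - v i| := abs_sub_le _ _ _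
      _ ≤ _ := by gcongr; exact ih _ (pred_lt hj) hi

theorem totalVariation_const (c : ℝ) : totalVariation (fun _ : Fin k => c) = 0 := by
  simp [totalVariation_eq_sum_abs]

theorem abs_sub_le_totalVariation (v : Fin k → ℝ) (i j : Fin k) :
    |v i - v j| ≤ totalVariation v := by
  wlog hij : j ≤ i generalizing i j
  · rw [abs_sub_comm]
    exact this j i (le_of_not_ge hij)
  rw [totalVariation_eq_sum_abs]
  exact (abs_sub_le_sum_Ioc v hij).trans
    (sum_le_sum_of_subset_of_nonneg (subset_univ _) fun _ _ _ => abs_nonneg _)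

theorem fidelity_const_le {L : Fin k → ℝ} {M : ℝ} (hL : ∀ i, 0 ≤ L i) (hLM : ∀ i, L i ≤ M)
    (f v : Fin k → ℝ) (j : Fin k) :
    fidelity L f (fun _ => v j) ≤ fidelity L f v + k * M * totalVariation v := by
  have hterm : ∀ i, L i * |f i - v j| ≤ L i * |f i - v i| + M * totalVariation v := fun i =>
    calc L i * |f i - v j| ≤ L i * (|f i - v i| + totalVariation v) := by
          gcongr
          · exact hL i
          · exact (abs_sub_le _ _ _).trans (by gcongr; exact abs_sub_le_totalVariation v i j)
      _ ≤ L i * |f i - v i| + M * totalVariation v := by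
          rw [mul_add]
          gcongr
          · exact (abs_nonneg _).trans (abs_sub_le_totalVariation v i j)
          · exact hLM i
  calc fidelity L f (fun _ => v j) ≤ ∑ i : Fin k, (L i * |f i - v i| + M * totalVariation v) :=
        sum_le_sum fun i _ => hterm i
    _ = fidelity L f v + k * M * totalVariation v := by
        rw [sum_add_distrib, sum_const, card_univ, Fintype.card_fin, nsmul_eq_mul, mul_assoc]
        rfl

theorem eq_of_forall_G1_le {lam M : ℝ} {L f u : Fin k → ℝ} (hL : ∀ i, 0 ≤ L i)
    (hLM : ∀ i, L i ≤ M) (hlam : 0 < lam) (hsmall : lam * (k * M) < 1)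
    (hmin : ∀ v, G1 k lam L f u ≤ G1 k lam L f v) (i j : Fin k) : u i = u j := by
  by_contra hne
  have hTV : 0 < totalVariation u :=
    (abs_pos.mpr (sub_ne_zero.mpr hne)).trans_le (abs_sub_le_totalVariation u i j)
  have hconst := hmin fun _ => u j
  rw [G1_eq, G1_eq, totalVariation_const] at hconst
  have hfid := mul_le_mul_of_nonneg_left (fidelity_const_le hL hLM f u j) hlam.le
  have hgain := mul_lt_mul_of_pos_right hsmall hTV
  linarith

def jumpSizes (f : Fin k → ℝ) : Set ℝ :=
  {x : ℝ | ∃ i : Fin k, i.val ≠ 0 ∧ f i ≠ f (pred i) ∧ x = |f i - f (pred i)|}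

theorem mul_lt_one_of_lt_threshold {L f : Fin k → ℝ} (hL : ∀ i, 0 < L i)
    (hfne : ∃ i : Fin k, i.val ≠ 0 ∧ f i ≠ f (pred i)) {lam : ℝ}
    (hlam : lam < sInf (jumpSizes f) /
        ((k : ℝ) * sSup (Set.range L) * (sSup (Set.range f) - sInf (Set.range f)))) :
    lam * (k * sSup (Set.range L)) < 1 := by
  obtain ⟨i₀, hi₀, hfi₀⟩ := hfne
  set R := sSup (Set.range f) - sInf (Set.range f)
  set c := (k : ℝ) * sSup (Set.range L)
  have hjumpR : |f i₀ - f (pred i₀)| ≤ R := abs_sub_le_sSup_sub_sInf f _ _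
  have hbdd : BddBelow (jumpSizes f) := ⟨0, by rintro _ ⟨i, -, -, rfl⟩; exact abs_nonneg _⟩
  have hmem : |f i₀ - f (pred i₀)| ∈ jumpSizes f := ⟨i₀, hi₀, hfi₀, rfl⟩
  have hminR : sInf (jumpSizes f) ≤ R := (csInf_le hbdd hmem).trans hjumpR
  have hR : 0 < R := (abs_pos.mpr (sub_ne_zero.mpr hfi₀)).trans_le hjumpR
  have hc : 0 < c := by
    have hk : (0 : ℝ) < k := by exact_mod_cast i₀.pos
    exact mul_pos hk <| (hL i₀).trans_le <| le_csSup (Set.finite_range L).bddAbove ⟨i₀, rfl⟩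
  have hthreshold : sInf (jumpSizes f) / (c * R) ≤ R / (c * R) :=
    div_le_div_of_nonneg_right hminR (by positivity)
  calc lam * c < R / (c * R) * c := mul_lt_mul_of_pos_right (hlam.trans_le hthreshold) hc
    _ = 1 := by field_simp

end Energy

theorem stmt8_general (k : ℕ)
    (L f : Fin k → ℝ) (hL : ∀ i, 0 < L i)
    (hfne : ∃ i : Fin k, i.val ≠ 0 ∧ f i ≠ f (pred i)) :
    ∀ lam : ℝ, 0 < lam →
      lam < sInf {x : ℝ | ∃ i : Fin k, i.val ≠ 0 ∧ f i ≠ f (pred i) ∧ x = |f i - f (pred i)|} /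
        ((k : ℝ) * sSup (Set.range L) * (sSup (Set.range f) - sInf (Set.range f))) →
      ∀ u : Fin k → ℝ, (∀ i : Fin k, u i ∈ Set.range f) →
        (∀ v : Fin k → ℝ, G1 k lam L f u ≤ G1 k lam L f v) →
        ∀ i j : Fin k, u i = u j := by
  intro lam hlam hthreshold u _ hmin
  exact eq_of_forall_G1_le (fun i => (hL i).le)
    (fun i => le_csSup (Set.finite_range L).bddAbove ⟨i, rfl⟩) hlam
    (mul_lt_one_of_lt_threshold hL hfne hthreshold) hmin

/-- for `p = 1` and
`λ < λ̄ = (minᵢ |fᵢ - fᵢ₋₁|)/(k (maxᵢ Lᵢ)(max f - min f))`, every minimizer of `G`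
with values among those of `f` is constant. -/
theorem stmt8 (k : ℕ) (hk : 2 ≤ k)
    (L f : Fin k → ℝ) (hL : ∀ i, 0 < L i)
    (hfne : ∃ i : Fin k, i.val ≠ 0 ∧ f i ≠ f (pred i)) :
    ∀ lam : ℝ, 0 < lam →
      lam < sInf {x : ℝ | ∃ i : Fin k, i.val ≠ 0 ∧ f i ≠ f (pred i) ∧ x = |f i - f (pred i)|} /
        ((k : ℝ) * sSup (Set.range L) * (sSup (Set.range f) - sInf (Set.range f))) →
      ∀ u : Fin k → ℝ, (∀ i : Fin k, u i ∈ Set.range f) →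
        (∀ v : Fin k → ℝ, G1 k lam L f u ≤ G1 k lam L f v) →
        ∀ i j : Fin k, u i = u j :=
  stmt8_general k L f hL hfne
end

section
/- Let p > 1 and let u be the unique minimizer of G. Suppose for some indices the minimizer satisfies u_{i-1} < u_i = u_{i+1} = … = u_{i+r} < u_{i+r+1} (a plateau with value ū strictly between its neighbors). Then ū minimizes c ↦ Σ_{j=i}^{i+r} L_j |c - f_j|^p over c ∈ (u_{i-1}, u_{i+r+1}). -/
/-! Moving the plateau of `u` from `ū` to any level `c` between its neighbours leaves the total
variation unchanged, because the two jumps at the ends of the plateau always add up to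
`u_{i+r+1} - u_{i-1}`; and it changes the fidelity term only on the plateau. Minimality of `u`
against this competitor is therefore exactly the claimed inequality. -/

open Finset

theorem Finset.sum_filter_le_sum_filter_of_sum_le {ι M : Type*} [Fintype ι] [AddCommMonoid M]
    [PartialOrder M] [IsOrderedCancelAddMonoid M] (P : ι → Prop) [DecidablePred P]
    {g h : ι → M} (hle : ∑ x, g x ≤ ∑ x, h x) (hout : ∀ x, ¬ P x → g x = h x) :
    ∑ x ∈ univ.filter P, g x ≤ ∑ x ∈ univ.filter P, h x := by
  rw [← sum_filter_add_sum_filter_not univ P g, ← sum_filter_add_sum_filter_not univ P h,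
    sum_congr rfl fun x hx => hout x (mem_filter.mp hx).2] at hle
  exact le_of_add_le_add_right hle

theorem Fintype.sum_eq_sum_of_eq_off_pair {ι M : Type*} [Fintype ι] [DecidableEq ι]
    [AddCommMonoid M] {g h : ι → M} {a b : ι} (hab : a ≠ b)
    (hoff : ∀ x, x ≠ a → x ≠ b → g x = h x) (hpair : g a + g b = h a + h b) :
    ∑ x, g x = ∑ x, h x := by
  rw [← sum_compl_add_sum {a, b} g, ← sum_compl_add_sum {a, b} h, sum_pair hab, sum_pair hab,
    hpair]
  congr 1
  refine Finset.sum_congr rfl fun x hx => ?_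
  simp only [mem_compl, mem_insert, mem_singleton, not_or] at hx
  exact hoff x hx.1 hx.2

section

variable {k : ℕ}

noncomputable def jump (v : Fin k → ℝ) (j : Fin k) : ℝ :=
  if j.val = 0 then 0 else |v j - v (pred j)|

theorem G_eq_sum_jump_add (lam p : ℝ) (L f v : Fin k → ℝ) :
    G k lam p L f v = ∑ j, jump v j + lam * ∑ j, L j * |f j - v j| ^ p := rfl

def fillBlock (u : Fin k → ℝ) (i r : ℕ) (c : ℝ) (j : Fin k) : ℝ :=
  if i ≤ j.val ∧ j.val ≤ i + r then c else u j

theorem fillBlock_eq_self {u : Fin k → ℝ} {i r : ℕ} {c : ℝ}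
    (hu : ∀ j : Fin k, i ≤ j.val → j.val ≤ i + r → u j = c) : fillBlock u i r c = u := by
  funext j
  unfold fillBlock
  split_ifs with hj
  exacts [(hu j hj.1 hj.2).symm, rfl]

theorem jump_fillBlock_eq_of_ne (u : Fin k → ℝ) (i r : ℕ) (c c' : ℝ) {j : Fin k}
    (hji : j.val ≠ i) (hjr : j.val ≠ i + r + 1) :
    jump (fillBlock u i r c) j = jump (fillBlock u i r c') j := by
  unfold jump fillBlock
  split_ifs <;> simp_all [pred] <;> omega

theorem jump_fillBlock_left (u : Fin k → ℝ) {i : ℕ} (r : ℕ) (c : ℝ) (hi : 0 < i)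
    (hik : i < k) : jump (fillBlock u i r c) ⟨i, hik⟩ = |c - u (pred ⟨i, hik⟩)| := by
  have : ¬i ≤ i - 1 := by omega
  simp [jump, fillBlock, pred, hi.ne', this]

theorem jump_fillBlock_right (u : Fin k → ℝ) (i r : ℕ) (c : ℝ) (hir : i + r + 1 < k) :
    jump (fillBlock u i r c) ⟨i + r + 1, hir⟩ = |u ⟨i + r + 1, hir⟩ - c| := by
  simp [jump, fillBlock, pred]

theorem sum_jump_fillBlock_eq (u : Fin k → ℝ) {i r : ℕ} (hi : 0 < i) (hir : i + r + 1 < k)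
    {c c' : ℝ} (hc : u (pred ⟨i, by omega⟩) ≤ c ∧ c ≤ u ⟨i + r + 1, hir⟩)
    (hc' : u (pred ⟨i, by omega⟩) ≤ c' ∧ c' ≤ u ⟨i + r + 1, hir⟩) :
    ∑ j, jump (fillBlock u i r c) j = ∑ j, jump (fillBlock u i r c') j := by
  refine Fintype.sum_eq_sum_of_eq_off_pair (a := ⟨i, by omega⟩) (b := ⟨i + r + 1, hir⟩)
    (by simp [Fin.ext_iff]; omega) (fun j hji hjr => jump_fillBlock_eq_of_ne u i r c c' ?_ ?_) ?_
  · exact fun h => hji (Fin.ext h)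
  · exact fun h => hjr (Fin.ext h)
  · simp only [jump_fillBlock_left u r _ hi, jump_fillBlock_right]
    rw [abs_of_nonneg (sub_nonneg.2 hc.1), abs_of_nonneg (sub_nonneg.2 hc.2),
      abs_of_nonneg (sub_nonneg.2 hc'.1), abs_of_nonneg (sub_nonneg.2 hc'.2)]
    ring

theorem sum_fidelity_le_of_sum_jump_eq {lam p : ℝ} (hlam : 0 < lam) {L f u v : Fin k → ℝ}
    (hu : G k lam p L f u ≤ G k lam p L f v) (hjump : ∑ j, jump v j = ∑ j, jump u j) :
    ∑ j, L j * |f j - u j| ^ p ≤ ∑ j, L j * |f j - v j| ^ p := by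
  rw [G_eq_sum_jump_add, G_eq_sum_jump_add, hjump] at hu
  exact le_of_mul_le_mul_left (le_of_add_le_add_left hu) hlam

end

/-- if the minimizer has a plateau `u_{i-1} < u_i = … = u_{i+r} < u_{i+r+1}`
with common value `ū`, then `ū` minimizes `c ↦ ∑_{j=i}^{i+r} L_j |c - f_j|^p` over
`(u_{i-1}, u_{i+r+1})`. (Indices here are `0`-based.) -/
theorem stmt13 (k : ℕ) (lam p : ℝ) (hlam : 0 < lam)
    (L f : Fin k → ℝ)
    (u : Fin k → ℝ) (hu : ∀ v : Fin k → ℝ, G k lam p L f u ≤ G k lam p L f v)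
    (i r : ℕ) (hi : 0 < i) (hir : i + r + 1 < k) (ubar : ℝ)
    (hplateau : ∀ j (_h1 : i ≤ j) (_h2 : j ≤ i + r), u ⟨j, by omega⟩ = ubar)
    (hleft : u ⟨i - 1, by omega⟩ < ubar)
    (hright : ubar < u ⟨i + r + 1, hir⟩) :
    ∀ c : ℝ, u ⟨i - 1, by omega⟩ < c → c < u ⟨i + r + 1, hir⟩ →
      (∑ j ∈ Finset.univ.filter (fun j : Fin k => i ≤ j.val ∧ j.val ≤ i + r),
          L j * |ubar - f j| ^ p) ≤
        ∑ j ∈ Finset.univ.filter (fun j : Fin k => i ≤ j.val ∧ j.val ≤ i + r),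
          L j * |c - f j| ^ p := by
  intro c hc₁ hc₂
  have hfill : fillBlock u i r ubar = u := fillBlock_eq_self fun j h₁ h₂ => hplateau j h₁ h₂
  have hjump : ∑ j, jump (fillBlock u i r c) j = ∑ j, jump u j := by
    conv_rhs => rw [← hfill]
    exact sum_jump_fillBlock_eq u hi hir ⟨hc₁.le, hc₂.le⟩ ⟨hleft.le, hright.le⟩
  have hfid := Finset.sum_filter_le_sum_filter_of_sum_le
    (fun j : Fin k => i ≤ j.val ∧ j.val ≤ i + r)
    (sum_fidelity_le_of_sum_jump_eq hlam (hu _) hjump)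
    fun j hj => by simp only [fillBlock, if_neg hj]
  refine le_of_eq_of_le ?_ (hfid.trans_eq ?_) <;> refine sum_congr rfl fun j hj => ?_ <;>
    obtain ⟨-, hj₁, hj₂⟩ := mem_filter.mp hj
  · rw [hplateau j hj₁ hj₂, abs_sub_comm]
  · rw [fillBlock, if_pos ⟨hj₁, hj₂⟩, abs_sub_comm]
end

section
/- Let p > 1, k = 2, f_1 < f_2, L_1, L_2 > 0 and set λ_T = (1/p) · (L_1^{1/(p-1)} + L_2^{1/(p-1)})^{p-1} / (L_1 L_2 (f_2 - f_1)^{p-1}). Then the unique minimizer (u_1, u_2) of G(v_1,v_2) = |v_2 - v_1| + λ(L_1|v_1 - f_1|^p + L_2|v_2 - f_2|^p) is: for λ ≤ λ_T, u_1 = u_2 = (L_1^{1/(p-1)} f_1 + L_2^{1/(p-1)} f_2)/(L_1^{1/(p-1)} + L_2^{1/(p-1)}); and for λ > λ_T, u_1 = f_1 + (pλL_1)^{-1/(p-1)}, u_2 = f_2 - (pλL_2)^{-1/(p-1)}. -/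
/-- The two-interval discrete energy with `L^p` fidelity. -/
noncomputable def G2 (lam p L1 L2 f1 f2 : ℝ) (v1 v2 : ℝ) : ℝ :=
  |v2 - v1| + lam * (L1 * |v1 - f1| ^ p + L2 * |v2 - f2| ^ p)

/-!
Both candidate points satisfy the first-order optimality condition of the convex energy: with
`dᵢ` the distance of `uᵢ` from `fᵢ`, the fidelity derivatives `pλLᵢdᵢ^{p-1}` agree and equal a
subgradient `μ ∈ [0, 1]` of `|v₂ - v₁|` at the jump. The tangent-line bound for `t ↦ t^p` then
turns this into global minimality. Below `λ_T` the jump is closed and `μ = λ/λ_T ≤ 1`; above it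
`μ = 1` and the jump `f₂ - f₁ - d₁ - d₂` stays nonnegative. Uniqueness follows from strict
convexity of the fidelity term.
-/

open Real

theorem Real.rpow_add_mul_sub_le {p x y : ℝ} (hp : 1 ≤ p) (hx : 0 ≤ x) (hy : 0 < y) :
    y ^ p + p * y ^ (p - 1) * (x - y) ≤ x ^ p := by
  have hbern := one_add_mul_self_le_rpow_one_add (s := (x - y) / y)
    (by rw [le_div_iff₀ hy]; linarith) hp
  rw [show 1 + (x - y) / y = x / y by field_simp; ring, div_rpow hx hy.le,
    le_div_iff₀ (rpow_pos_of_pos hy p)] at hbern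
  calc y ^ p + p * y ^ (p - 1) * (x - y) = (1 + p * ((x - y) / y)) * y ^ p := by
        rw [rpow_sub_one hy.ne']; field_simp
    _ ≤ x ^ p := hbern

theorem Real.abs_add_div_two_rpow_lt {p x y : ℝ} (hp : 1 < p) (hxy : x ≠ y) :
    |(x + y) / 2| ^ p < (|x| ^ p + |y| ^ p) / 2 := by
  rcases eq_or_ne |x| |y| with h | h
  · obtain rfl : x = -y := (abs_eq_abs.mp h).resolve_left hxy
    have hy : y ≠ 0 := by rintro rfl; simp at hxy
    rw [neg_add_cancel, zero_div, abs_zero, zero_rpow (by positivity), abs_neg]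
    linarith [rpow_pos_of_pos (abs_pos.mpr hy) p]
  · calc |(x + y) / 2| ^ p ≤ ((|x| + |y|) / 2) ^ p := by
          gcongr
          rw [abs_div, abs_two]
          gcongr
          exact abs_add_le x y
      _ < (|x| ^ p + |y| ^ p) / 2 := by
          have := (strictConvexOn_rpow hp).2 (abs_nonneg x) (abs_nonneg y) h
            (by norm_num : (0 : ℝ) < 1 / 2) (by norm_num : (0 : ℝ) < 1 / 2) (by norm_num)
          simp only [smul_eq_mul] at this
          rw [show (|x| + |y|) / 2 = 1 / 2 * |x| + 1 / 2 * |y| by ring]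
          linarith

theorem Real.abs_add_div_two_rpow_le {p : ℝ} (hp : 1 < p) (x y : ℝ) :
    |(x + y) / 2| ^ p ≤ (|x| ^ p + |y| ^ p) / 2 := by
  rcases eq_or_ne x y with rfl | hxy
  · rw [add_self_div_two, add_self_div_two]
  · exact (abs_add_div_two_rpow_lt hp hxy).le

theorem Real.mul_div_rpow_one_div {q L s : ℝ} (hq : q ≠ 0) (hL : 0 < L) (hs : 0 ≤ s) :
    L * (s / L ^ (1 / q)) ^ q = s ^ q := by
  rw [div_rpow hs (rpow_nonneg hL.le _), ← rpow_mul hL.le, one_div_mul_cancel hq, rpow_one,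
    mul_div_cancel₀ _ hL.ne']

theorem Real.mul_rpow_neg_one_div {q x L : ℝ} (hx : 0 ≤ x) (hL : 0 ≤ L) :
    (x * L) ^ (-1 / q) = x ^ (-1 / q) / L ^ (1 / q) := by
  rw [mul_rpow hx hL, neg_div, rpow_neg hL]
  exact (div_eq_mul_inv _ _).symm

section Energy

variable {lam p L1 L2 f1 f2 : ℝ}

theorem mul_abs_add_div_two_sub_rpow_le (hp : 1 < p) {L : ℝ} (hL : 0 < L) (f u w : ℝ) :
    L * |(u + w) / 2 - f| ^ p ≤ (L * |u - f| ^ p + L * |w - f| ^ p) / 2 ∧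
      (u ≠ w → L * |(u + w) / 2 - f| ^ p < (L * |u - f| ^ p + L * |w - f| ^ p) / 2) := by
  rw [show (u + w) / 2 - f = ((u - f) + (w - f)) / 2 by ring, ← mul_add, mul_div_assoc]
  refine ⟨mul_le_mul_of_nonneg_left (abs_add_div_two_rpow_le hp _ _) hL.le, fun huw => ?_⟩
  exact mul_lt_mul_of_pos_left (abs_add_div_two_rpow_lt hp (by rwa [Ne, sub_left_inj])) hL

theorem G2_midpoint_lt (hp : 1 < p) (hlam : 0 < lam) (hL1 : 0 < L1) (hL2 : 0 < L2)
    {u1 u2 w1 w2 : ℝ} (hne : u1 ≠ w1 ∨ u2 ≠ w2) :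
    G2 lam p L1 L2 f1 f2 ((u1 + w1) / 2) ((u2 + w2) / 2) <
      (G2 lam p L1 L2 f1 f2 u1 u2 + G2 lam p L1 L2 f1 f2 w1 w2) / 2 := by
  have hjump : |(u2 + w2) / 2 - (u1 + w1) / 2| ≤ (|u2 - u1| + |w2 - w1|) / 2 := by
    rw [show (u2 + w2) / 2 - (u1 + w1) / 2 = ((u2 - u1) + (w2 - w1)) / 2 by ring, abs_div,
      abs_two]
    gcongr
    exact abs_add_le _ _
  obtain ⟨h1, h1'⟩ := mul_abs_add_div_two_sub_rpow_le hp hL1 f1 u1 w1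
  obtain ⟨h2, h2'⟩ := mul_abs_add_div_two_sub_rpow_le hp hL2 f2 u2 w2
  have hfid : L1 * |(u1 + w1) / 2 - f1| ^ p + L2 * |(u2 + w2) / 2 - f2| ^ p <
      ((L1 * |u1 - f1| ^ p + L2 * |u2 - f2| ^ p) +
        (L1 * |w1 - f1| ^ p + L2 * |w2 - f2| ^ p)) / 2 := by
    rcases hne with hne | hne
    · linarith [h1' hne]
    · linarith [h2' hne]
  unfold G2
  linarith [mul_lt_mul_of_pos_left hfid hlam]

theorem G2_minimizer_unique (hp : 1 < p) (hlam : 0 < lam) (hL1 : 0 < L1) (hL2 : 0 < L2)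
    {u1 u2 w1 w2 : ℝ}
    (hu : ∀ v1 v2, G2 lam p L1 L2 f1 f2 u1 u2 ≤ G2 lam p L1 L2 f1 f2 v1 v2)
    (hw : ∀ v1 v2, G2 lam p L1 L2 f1 f2 w1 w2 ≤ G2 lam p L1 L2 f1 f2 v1 v2) :
    u1 = w1 ∧ u2 = w2 := by
  by_contra hne
  have := G2_midpoint_lt (f1 := f1) (f2 := f2) hp hlam hL1 hL2 (not_and_or.mp hne)
  linarith [hu ((u1 + w1) / 2) ((u2 + w2) / 2), hu w1 w2, hw u1 u2]

/-- `hgap` says that `μ` is a subgradient of `|·|` at the jump `(f₂ - d₂) - (f₁ + d₁)`. -/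
theorem G2_le_of_kkt (hp : 1 ≤ p) (hlam : 0 ≤ lam) (hL1 : 0 ≤ L1) (hL2 : 0 ≤ L2)
    {d1 d2 μ : ℝ} (hd1 : 0 < d1) (hd2 : 0 < d2)
    (h1 : p * lam * L1 * d1 ^ (p - 1) = μ) (h2 : p * lam * L2 * d2 ^ (p - 1) = μ) (hμ : μ ≤ 1)
    (hgap : |f2 - f1 - (d1 + d2)| ≤ μ * (f2 - f1 - (d1 + d2))) (v1 v2 : ℝ) :
    G2 lam p L1 L2 f1 f2 (f1 + d1) (f2 - d2) ≤ G2 lam p L1 L2 f1 f2 v1 v2 := by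
  have hμ0 : 0 ≤ μ := h1 ▸ by positivity
  have hlin1 : lam * L1 * d1 ^ p + μ * (|v1 - f1| - d1) ≤ lam * L1 * |v1 - f1| ^ p := by
    have := mul_le_mul_of_nonneg_left (rpow_add_mul_sub_le hp (abs_nonneg (v1 - f1)) hd1)
      (mul_nonneg hlam hL1)
    rw [← h1]
    linarith
  have hlin2 : lam * L2 * d2 ^ p + μ * (|v2 - f2| - d2) ≤ lam * L2 * |v2 - f2| ^ p := by
    have := mul_le_mul_of_nonneg_left (rpow_add_mul_sub_le hp (abs_nonneg (v2 - f2)) hd2)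
      (mul_nonneg hlam hL2)
    rw [← h2]
    linarith
  have htri : f2 - f1 ≤ |v2 - v1| + |v1 - f1| + |v2 - f2| := by
    linarith [le_abs_self (v1 - f1), le_abs_self (v2 - v1), neg_abs_le (v2 - f2)]
  unfold G2
  rw [add_sub_cancel_left, abs_of_pos hd1, sub_sub_cancel_left, abs_neg, abs_of_pos hd2,
    show f2 - d2 - (f1 + d1) = f2 - f1 - (d1 + d2) by ring]
  linarith [mul_le_mul_of_nonneg_left htri hμ0, mul_le_of_le_one_left (abs_nonneg (v2 - v1)) hμ]

end Energy

noncomputable def splitThreshold (p L1 L2 f1 f2 : ℝ) : ℝ :=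
  (1 / p) * (L1 ^ ((1 : ℝ) / (p - 1)) + L2 ^ ((1 : ℝ) / (p - 1))) ^ (p - 1) /
    (L1 * L2 * (f2 - f1) ^ (p - 1))

noncomputable def weightedMean (p L1 L2 f1 f2 : ℝ) : ℝ :=
  (L1 ^ ((1 : ℝ) / (p - 1)) * f1 + L2 ^ ((1 : ℝ) / (p - 1)) * f2) /
    (L1 ^ ((1 : ℝ) / (p - 1)) + L2 ^ ((1 : ℝ) / (p - 1)))

/-- Both regimes place `uᵢ` at distance `s / Lᵢ^{1/(p-1)}` from `fᵢ`, with `s = splitScale`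
below the threshold and `s = (pλ)^{-1/(p-1)}` above it. -/
noncomputable def splitScale (p L1 L2 f1 f2 : ℝ) : ℝ :=
  L1 ^ ((1 : ℝ) / (p - 1)) * L2 ^ ((1 : ℝ) / (p - 1)) * (f2 - f1) /
    (L1 ^ ((1 : ℝ) / (p - 1)) + L2 ^ ((1 : ℝ) / (p - 1)))

section Threshold

variable {p L1 L2 f1 f2 : ℝ}

theorem splitScale_pos (hL1 : 0 < L1) (hL2 : 0 < L2) (hf : f1 < f2) :
    0 < splitScale p L1 L2 f1 f2 := by
  unfold splitScale
  have := sub_pos.mpr hf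
  positivity

theorem div_add_div_eq_div_splitScale_mul (hL1 : 0 < L1) (hL2 : 0 < L2) (hf : f1 ≠ f2) (s : ℝ) :
    s / L1 ^ ((1 : ℝ) / (p - 1)) + s / L2 ^ ((1 : ℝ) / (p - 1)) =
      s / splitScale p L1 L2 f1 f2 * (f2 - f1) := by
  have ha := rpow_pos_of_pos hL1 (1 / (p - 1))
  have hb := rpow_pos_of_pos hL2 (1 / (p - 1))
  have hF : f2 - f1 ≠ 0 := sub_ne_zero.mpr hf.symm
  unfold splitScale
  field_simp
  ring

theorem splitThreshold_eq (hp : 1 < p) (hL1 : 0 < L1) (hL2 : 0 < L2) (hf : f1 < f2) :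
    splitThreshold p L1 L2 f1 f2 = (p * splitScale p L1 L2 f1 f2 ^ (p - 1))⁻¹ := by
  have hq : p - 1 ≠ 0 := by linarith
  have ha := rpow_pos_of_pos hL1 (1 / (p - 1))
  have hb := rpow_pos_of_pos hL2 (1 / (p - 1))
  have hF := sub_pos.mpr hf
  unfold splitThreshold splitScale
  rw [div_rpow (by positivity) (by positivity), mul_rpow (by positivity) hF.le,
    mul_rpow ha.le hb.le, ← rpow_mul hL1.le, ← rpow_mul hL2.le, one_div_mul_cancel hq,
    rpow_one, rpow_one]
  field_simp

end Threshold

section Regimes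

variable {lam p L1 L2 f1 f2 : ℝ}

theorem G2_weightedMean_le (hp : 1 < p) (hlam : 0 ≤ lam) (hL1 : 0 < L1) (hL2 : 0 < L2)
    (hf : f1 < f2) (hle : lam ≤ splitThreshold p L1 L2 f1 f2) (v1 v2 : ℝ) :
    G2 lam p L1 L2 f1 f2 (weightedMean p L1 L2 f1 f2) (weightedMean p L1 L2 f1 f2) ≤
      G2 lam p L1 L2 f1 f2 v1 v2 := by
  have hq : p - 1 ≠ 0 := by linarith
  have ha := rpow_pos_of_pos hL1 (1 / (p - 1))
  have hb := rpow_pos_of_pos hL2 (1 / (p - 1))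
  have hr := splitScale_pos (p := p) hL1 hL2 hf
  set r := splitScale p L1 L2 f1 f2 with hr_def
  have hm1 : weightedMean p L1 L2 f1 f2 = f1 + r / L1 ^ ((1 : ℝ) / (p - 1)) := by
    rw [hr_def]; unfold weightedMean splitScale; field_simp; ring
  have hm2 : weightedMean p L1 L2 f1 f2 = f2 - r / L2 ^ ((1 : ℝ) / (p - 1)) := by
    rw [hr_def]; unfold weightedMean splitScale; field_simp; ring
  have hμ : p * lam * r ^ (p - 1) ≤ 1 := by
    have hP : 0 < p * r ^ (p - 1) := by positivity
    rw [splitThreshold_eq hp hL1 hL2 hf] at hle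
    calc p * lam * r ^ (p - 1) = p * r ^ (p - 1) * lam := by ring
      _ ≤ p * r ^ (p - 1) * (p * r ^ (p - 1))⁻¹ := by gcongr
      _ = 1 := mul_inv_cancel₀ hP.ne'
  have hsum := div_add_div_eq_div_splitScale_mul (p := p) hL1 hL2 hf.ne r
  rw [div_self hr.ne', one_mul] at hsum
  have hcrit1 :
      p * lam * L1 * (r / L1 ^ ((1 : ℝ) / (p - 1))) ^ (p - 1) = p * lam * r ^ (p - 1) := by
    rw [mul_assoc, mul_div_rpow_one_div hq hL1 hr.le]
  have hcrit2 :
      p * lam * L2 * (r / L2 ^ ((1 : ℝ) / (p - 1))) ^ (p - 1) = p * lam * r ^ (p - 1) := by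
    rw [mul_assoc, mul_div_rpow_one_div hq hL2 hr.le]
  nth_rewrite 1 [hm1]
  rw [hm2]
  refine G2_le_of_kkt hp.le hlam hL1.le hL2.le (by positivity) (by positivity) hcrit1 hcrit2 hμ
    ?_ v1 v2
  rw [hsum, sub_self, abs_zero, mul_zero]

theorem G2_split_le (hp : 1 < p) (hlam : 0 < lam) (hL1 : 0 < L1) (hL2 : 0 < L2)
    (hf : f1 < f2) (hle : splitThreshold p L1 L2 f1 f2 ≤ lam) (v1 v2 : ℝ) :
    G2 lam p L1 L2 f1 f2 (f1 + (p * lam * L1) ^ (-(1 : ℝ) / (p - 1)))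
      (f2 - (p * lam * L2) ^ (-(1 : ℝ) / (p - 1))) ≤ G2 lam p L1 L2 f1 f2 v1 v2 := by
  have hq : p - 1 ≠ 0 := by linarith
  have hpl : 0 < p * lam := by positivity
  have hr := splitScale_pos (p := p) hL1 hL2 hf
  set r := splitScale p L1 L2 f1 f2
  set c := (p * lam) ^ (-(1 : ℝ) / (p - 1)) with hc_def
  have hc : 0 < c := rpow_pos_of_pos hpl _
  have hcp : c ^ (p - 1) = (p * lam)⁻¹ := by
    rw [hc_def, ← rpow_mul hpl.le, div_mul_cancel₀ _ hq, rpow_neg_one]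
  have hcr : c ≤ r := by
    rw [← rpow_le_rpow_iff hc.le hr.le (by linarith : 0 < p - 1), hcp,
      inv_le_iff_one_le_mul₀ hpl]
    rw [splitThreshold_eq hp hL1 hL2 hf, inv_le_iff_one_le_mul₀ (by positivity)] at hle
    linarith
  have hcrit1 : p * lam * L1 * (c / L1 ^ ((1 : ℝ) / (p - 1))) ^ (p - 1) = 1 := by
    rw [mul_assoc, mul_div_rpow_one_div hq hL1 hc.le, hcp, mul_inv_cancel₀ hpl.ne']
  have hcrit2 : p * lam * L2 * (c / L2 ^ ((1 : ℝ) / (p - 1))) ^ (p - 1) = 1 := by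
    rw [mul_assoc, mul_div_rpow_one_div hq hL2 hc.le, hcp, mul_inv_cancel₀ hpl.ne']
  have hgap : c / L1 ^ ((1 : ℝ) / (p - 1)) + c / L2 ^ ((1 : ℝ) / (p - 1)) ≤ f2 - f1 := by
    rw [div_add_div_eq_div_splitScale_mul hL1 hL2 hf.ne]
    exact mul_le_of_le_one_left (sub_pos.mpr hf).le ((div_le_one hr).mpr hcr)
  rw [mul_rpow_neg_one_div hpl.le hL1.le, mul_rpow_neg_one_div hpl.le hL2.le]
  refine G2_le_of_kkt hp.le hlam.le hL1.le hL2.le (by positivity) (by positivity) hcrit1 hcrit2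
    le_rfl ?_ v1 v2
  rw [one_mul, abs_of_nonneg (sub_nonneg.mpr hgap)]

end Regimes

/-- explicit solution for `k = 2` and `p > 1`: below the threshold
`λ_T` the minimizer is a constant (a weighted average of `f₁, f₂`), above it the
two entries split off from `f₁, f₂` by `(pλLᵢ)^{-1/(p-1)}`. -/
theorem stmt18 (p lam L1 L2 f1 f2 u1 u2 : ℝ) (hp : 1 < p) (hlam : 0 < lam)
    (hL1 : 0 < L1) (hL2 : 0 < L2) (hf : f1 < f2)
    (hmin : ∀ v1 v2 : ℝ, G2 lam p L1 L2 f1 f2 u1 u2 ≤ G2 lam p L1 L2 f1 f2 v1 v2) :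
    (lam ≤ (1 / p) * (L1 ^ ((1 : ℝ) / (p - 1)) + L2 ^ ((1 : ℝ) / (p - 1))) ^ (p - 1) /
        (L1 * L2 * (f2 - f1) ^ (p - 1)) →
      u1 = (L1 ^ ((1 : ℝ) / (p - 1)) * f1 + L2 ^ ((1 : ℝ) / (p - 1)) * f2) /
          (L1 ^ ((1 : ℝ) / (p - 1)) + L2 ^ ((1 : ℝ) / (p - 1))) ∧
      u2 = (L1 ^ ((1 : ℝ) / (p - 1)) * f1 + L2 ^ ((1 : ℝ) / (p - 1)) * f2) /
          (L1 ^ ((1 : ℝ) / (p - 1)) + L2 ^ ((1 : ℝ) / (p - 1)))) ∧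
    ((1 / p) * (L1 ^ ((1 : ℝ) / (p - 1)) + L2 ^ ((1 : ℝ) / (p - 1))) ^ (p - 1) /
        (L1 * L2 * (f2 - f1) ^ (p - 1)) < lam →
      u1 = f1 + (p * lam * L1) ^ (-(1 : ℝ) / (p - 1)) ∧
      u2 = f2 - (p * lam * L2) ^ (-(1 : ℝ) / (p - 1))) :=
  ⟨fun hle => G2_minimizer_unique hp hlam hL1 hL2 hmin
      (G2_weightedMean_le hp hlam.le hL1 hL2 hf hle),
    fun hlt => G2_minimizer_unique hp hlam hL1 hL2 hmin
      (G2_split_le hp hlam hL1 hL2 hf hlt.le)⟩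
end
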